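/- Let N = (V, A) be a binary phylogenetic network over a finite leaf set X. Then N is tree-based if and only if there exists a truth assignment f : A → Bool satisfying all of the following clauses: f(a) = true for every arc a ∈ S₁; for every vertex v of in-degree 2 with incoming arcs a and b, (f(a) ∨ f(b)) ∧ (¬f(a) ∨ ¬f(b)) holds; and for every vertex w of out-degree 2 with outgoing arcs a′ and b′, f(a′) ∨ f(b′) holds. (That is, the 2-SAT instance C_N associated with N is satisfiable if and only if N is tree-based.) -/
import Mathlib


/-! Directed multigraphs, walks, and binary phylogenetic networks
(following Francis & Steel, "Which phylogenetic networks are merely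
trees with additional arcs?"). -/

universe u1 u2 u3 u4 u5 u6 u7

/-- In-degree of `v`: the number of arcs with target `v`. -/
noncomputable def InDeg {V : Type u2} {A : Type u3} (t : A → V) (v : V) : ℕ := {a : A | t a = v}.ncard

/-- Out-degree of `v`: the number of arcs with source `v`. -/
noncomputable def OutDeg {V : Type u2} {A : Type u3} (s : A → V) (v : V) : ℕ := {a : A | s a = v}.ncard

/-- In-degree of `v` in the sub-digraph with arc set `A₀`. -/
noncomputable def InDegIn {V : Type u2} {A : Type u3} (t : A → V) (A₀ : Set A) (v : V) : ℕ :=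
  {a : A | a ∈ A₀ ∧ t a = v}.ncard

/-- Out-degree of `v` in the sub-digraph with arc set `A₀`. -/
noncomputable def OutDegIn {V : Type u2} {A : Type u3} (s : A → V) (A₀ : Set A) (v : V) : ℕ :=
  {a : A | a ∈ A₀ ∧ s a = v}.ncard

/-- `ArcWalk s t u p v` : the list of arcs `p` is a directed walk from `u` to `v`
(consecutive arcs are compatible). -/
inductive ArcWalk {V : Type u2} {A : Type u3} (s t : A → V) : V → List A → V → Prop
  | nil (v : V) : ArcWalk s t v [] v
  | cons {u w : V} {a : A} {p : List A} :
      s a = u → ArcWalk s t (t a) p w → ArcWalk s t u (a :: p) w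

/-- The digraph `(V, S)` is a rooted directed tree with root `r`: every vertex of `V`
is reachable from `r` by a unique directed path using only arcs in `S`. -/
def IsRootedTree {V : Type u2} {A : Type u3} (s t : A → V) (S : Set A) (r : V) : Prop :=
  ∀ v : V, ∃! p : List A, (∀ a ∈ p, a ∈ S) ∧ ArcWalk s t r p v

/-- `(V₀, A₀)` is a rooted directed tree with root `r` (as a sub-digraph of the
ambient digraph given by `s`, `t`). -/
def IsRootedTreeOn {V : Type u2} {A : Type u3} (s t : A → V) (V₀ : Set V) (A₀ : Set A)
    (r : V) : Prop :=
  r ∈ V₀ ∧ (∀ a ∈ A₀, s a ∈ V₀ ∧ t a ∈ V₀) ∧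
    ∀ v ∈ V₀, ∃! p : List A, (∀ a ∈ p, a ∈ A₀) ∧ ArcWalk s t r p v

/-- A set of arcs is independent if no two distinct arcs of it share a vertex
(the vertices of an arc `a` being `s a` and `t a`). -/
def IndepArcs {V : Type u2} {A : Type u3} (s t : A → V) (I : Set A) : Prop :=
  ∀ a ∈ I, ∀ b ∈ I, a ≠ b → s a ≠ s b ∧ s a ≠ t b ∧ t a ≠ s b ∧ t a ≠ t b

/-- A binary phylogenetic network over the (finite) leaf set `X`: a finite acyclic
directed multigraph whose out-degree-0 vertices are exactly the (images of the)
elements of `X`, each leaf has in-degree 1, there is a unique in-degree-0 vertex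
(the root) of out-degree 1 or 2, and every other vertex has in-degree 2 and
out-degree 1, or in-degree 1 and out-degree 2. -/
structure PhyloNetwork (X : Type u1) (V : Type u2) (A : Type u3) where
  src : A → V
  tgt : A → V
  leafEmb : X → V
  root : V
  finV : Finite V
  finA : Finite A
  leafEmb_inj : Function.Injective leafEmb
  acyclic : ∀ (v : V) (p : List A), p ≠ [] → ¬ ArcWalk src tgt v p v
  leaf_iff : ∀ v : V, (∃ x : X, leafEmb x = v) ↔ OutDeg src v = 0
  leaf_indeg : ∀ x : X, InDeg tgt (leafEmb x) = 1
  root_indeg : InDeg tgt root = 0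
  root_unique : ∀ v : V, InDeg tgt v = 0 → v = root
  root_outdeg : OutDeg src root = 1 ∨ OutDeg src root = 2
  deg_other : ∀ v : V, v ≠ root → (¬ ∃ x : X, leafEmb x = v) →
    (InDeg tgt v = 2 ∧ OutDeg src v = 1) ∨ (InDeg tgt v = 1 ∧ OutDeg src v = 2)

namespace PhyloNetwork

variable {X : Type u1} {V : Type u2} {A : Type u3}

/-- The set of leaves of the network (the copy of `X` inside `V`). -/
def leaves (N : PhyloNetwork X V A) : Set V := Set.range N.leafEmb

/-- `S ⊆ A` is a support tree for `N`: the digraph `(V, S)` is a rooted directed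
tree with root `N.root` whose out-degree-0 vertices are exactly the leaves. -/
def IsSupportTree (N : PhyloNetwork X V A) (S : Set A) : Prop :=
  IsRootedTree N.src N.tgt S N.root ∧
    ∀ v : V, OutDegIn N.src S v = 0 ↔ v ∈ N.leaves

/-- `N` is tree-based if it has a support tree. -/
def TreeBased (N : PhyloNetwork X V A) : Prop := ∃ S : Set A, N.IsSupportTree S

/-- `S₁`: the arcs whose source has out-degree 1 or whose target has in-degree 1. -/
def S1 (N : PhyloNetwork X V A) : Set A :=
  {a : A | OutDeg N.src (N.src a) = 1 ∨ InDeg N.tgt (N.tgt a) = 1}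

/-- `S` is admissible: it contains `S₁`, every in-degree-2 vertex has exactly one
incoming arc in `S` (C₁), and every out-degree-2 vertex has at least one outgoing
arc in `S` (C₂). -/
def Admissible (N : PhyloNetwork X V A) (S : Set A) : Prop :=
  N.S1 ⊆ S ∧
    (∀ v : V, InDeg N.tgt v = 2 → ∃! a : A, a ∈ S ∧ N.tgt a = v) ∧
    (∀ v : V, OutDeg N.src v = 2 → ∃ a ∈ S, N.src a = v)

/-- An antichain: no directed path from one element to another distinct element. -/
def IsAntichainIn (N : PhyloNetwork X V A) (𝒜 : Set V) : Prop :=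
  ∀ u ∈ 𝒜, ∀ v ∈ 𝒜, u ≠ v → ∀ p : List A, ¬ ArcWalk N.src N.tgt u p v

/-- The antichain-to-leaf property: from every antichain of non-leaf vertices there
is a family of pairwise arc-disjoint directed paths to leaves. -/
def AntichainToLeaf (N : PhyloNetwork X V A) : Prop :=
  ∀ 𝒜 : Set V, (∀ v ∈ 𝒜, v ∉ N.leaves) → N.IsAntichainIn 𝒜 →
    ∃ p : V → List A,
      (∀ v ∈ 𝒜, ∃ w ∈ N.leaves, ArcWalk N.src N.tgt v (p v) w) ∧
      (∀ u ∈ 𝒜, ∀ v ∈ 𝒜, u ≠ v → ∀ a ∈ p u, a ∉ p v)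

end PhyloNetwork

/-- The sub-digraph `(V₀, A₀)` of the digraph given by `s, t` is a subdivision of the
digraph given by `s', t'`, realized by the vertex map `φV`: the vertices of the target
digraph correspond exactly to the vertices of `(V₀, A₀)` that do not have in-degree 1
and out-degree 1, and each target arc corresponds to a directed path of `(V₀, A₀)`
with all internal vertices suppressed, these paths partitioning `A₀`. Equivalently,
the target digraph is obtained from `(V₀, A₀)` by repeatedly suppressing all vertices
of in-degree 1 and out-degree 1. -/
def SubdivOn {V : Type u2} {A : Type u3} {V' : Type u4} {A' : Type u5}
    (s t : A → V) (V₀ : Set V) (A₀ : Set A) (s' t' : A' → V') (φV : V' → V) : Prop :=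
  Function.Injective φV ∧
  (∀ v' : V', φV v' ∈ V₀) ∧
  (∀ a ∈ A₀, s a ∈ V₀ ∧ t a ∈ V₀) ∧
  (∀ v ∈ V₀, v ∈ Set.range φV ↔ ¬ (InDegIn t A₀ v = 1 ∧ OutDegIn s A₀ v = 1)) ∧
  ∃ φA : A' → List A,
    (∀ e : A', φA e ≠ [] ∧ (φA e).Nodup ∧ (∀ a ∈ φA e, a ∈ A₀) ∧
      ArcWalk s t (φV (s' e)) (φA e) (φV (t' e)) ∧
      ∀ a ∈ (φA e).dropLast, t a ∉ Set.range φV) ∧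
    (∀ a ∈ A₀, ∃! e : A', a ∈ φA e)

/-- A rooted binary phylogenetic `X`-tree: a binary phylogenetic network over `X`
with no vertices of in-degree 2. -/
def IsPhyloTree {X : Type u1} {V : Type u2} {A : Type u3}
    (T : PhyloNetwork X V A) : Prop :=
  ∀ v : V, InDeg T.tgt v ≠ 2

/-- `N` is based on the tree `T`: `N` has a support tree `S` such that `(V, S)` is a
subdivision of `T`, matching roots and leaf labels. -/
def BasedOn {X : Type u1} {V : Type u2} {A : Type u3} {V' : Type u4} {A' : Type u5}
    (N : PhyloNetwork X V A) (T : PhyloNetwork X V' A') : Prop :=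
  ∃ (S : Set A) (φV : V' → V),
    N.IsSupportTree S ∧
    SubdivOn N.src N.tgt Set.univ S T.src T.tgt φV ∧
    φV T.root = N.root ∧
    ∀ x : X, φV (T.leafEmb x) = N.leafEmb x

/-- `N` displays the tree `T`: there are `V₀ ⊆ V` and `A₀ ⊆ A` forming a rooted
directed tree whose out-degree-0 vertices are exactly the leaves of `N`, such that
`T` is obtained from `(V₀, A₀)` by repeatedly suppressing vertices of in-degree 1 and
out-degree 1 and deleting the root together with its outgoing arc so long as the root
has out-degree 1 (the deleted root chain is the path `p₀`). -/
def Displays {X : Type u1} {V : Type u2} {A : Type u3} {V' : Type u4} {A' : Type u5}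
    (N : PhyloNetwork X V A) (T : PhyloNetwork X V' A') : Prop :=
  ∃ (V₀ : Set V) (A₀ : Set A) (r₀ : V) (φV : V' → V) (p₀ : List A) (φA : A' → List A),
    IsRootedTreeOn N.src N.tgt V₀ A₀ r₀ ∧
    (∀ v ∈ V₀, OutDegIn N.src A₀ v = 0 ↔ v ∈ N.leaves) ∧
    Function.Injective φV ∧
    (∀ v' : V', φV v' ∈ V₀) ∧
    (∀ x : X, φV (T.leafEmb x) = N.leafEmb x) ∧
    p₀.Nodup ∧ (∀ a ∈ p₀, a ∈ A₀) ∧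
    ArcWalk N.src N.tgt r₀ p₀ (φV T.root) ∧
    (∀ a ∈ p₀, OutDegIn N.src A₀ (N.src a) = 1 ∧ N.src a ∉ Set.range φV) ∧
    (∀ e : A', φA e ≠ [] ∧ (φA e).Nodup ∧ (∀ a ∈ φA e, a ∈ A₀) ∧
      ArcWalk N.src N.tgt (φV (T.src e)) (φA e) (φV (T.tgt e)) ∧
      ∀ a ∈ (φA e).dropLast, N.tgt a ∉ Set.range φV) ∧
    (∀ a ∈ A₀, (a ∈ p₀ ∧ ∀ e : A', a ∉ φA e) ∨ (a ∉ p₀ ∧ ∃! e : A', a ∈ φA e))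

/-- The vertices of `N` having a directed path (possibly trivial) to a vertex in `L`. -/
def KeepV {X : Type u1} {V : Type u2} {A : Type u3}
    (N : PhyloNetwork X V A) (L : Set V) : Set V :=
  {v : V | ∃ (p : List A) (w : V), w ∈ L ∧ ArcWalk N.src N.tgt v p w}

/-- The arcs of `N` lying on a directed path ending at a vertex in `L`. -/
def KeepA {X : Type u1} {V : Type u2} {A : Type u3}
    (N : PhyloNetwork X V A) (L : Set V) : Set A :=
  {a : A | ∃ (p : List A) (w : V), w ∈ L ∧ ArcWalk N.src N.tgt (N.tgt a) p w}

section AuxWalk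

variable {V : Type u2} {A : Type u3} {s t : A → V}

theorem arcwalk_nil_eq {u v : V} (h : ArcWalk s t u [] v) : u = v := by
  cases h; rfl

theorem arcwalk_append : ∀ {u p v}, ArcWalk s t u p v → ∀ {q w}, ArcWalk s t v q w →
    ArcWalk s t u (p ++ q) w := by
  intro u p v h
  induction h with
  | nil => intro q w h2; simpa using h2
  | cons hs _ ih => intro q w h2; exact ArcWalk.cons hs (ih h2)

theorem arcwalk_last {u p v} (h : ArcWalk s t u p v) (hp : p ≠ []) :
    ∃ q a, p = q ++ [a] ∧ ArcWalk s t u q (s a) ∧ t a = v := by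
  induction h with
  | nil => exact absurd rfl hp
  | @cons u' w a p' hs h ih =>
    rcases eq_or_ne p' [] with rfl | hne
    · refine ⟨[], a, rfl, ?_, arcwalk_nil_eq h⟩
      rw [← hs]; exact ArcWalk.nil _
    · obtain ⟨q, b, rfl, hw, hb⟩ := ih hne
      exact ⟨a :: q, b, rfl, ArcWalk.cons hs hw, hb⟩

theorem arcwalk_mem_tgt {w p v} (h : ArcWalk s t w p v) {u} (hu : u ∈ p.map t) :
    ∃ q r, p = q ++ r ∧ q ≠ [] ∧ ArcWalk s t w q u := by
  induction h with
  | nil => simp at hu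
  | @cons u' w' a p' hs h ih =>
    rw [List.map_cons, List.mem_cons] at hu
    rcases hu with rfl | hu
    · exact ⟨[a], p', rfl, by simp, ArcWalk.cons hs (ArcWalk.nil _)⟩
    · obtain ⟨q, r, rfl, hq, hw⟩ := ih hu
      exact ⟨a :: q, r, rfl, by simp, ArcWalk.cons hs hw⟩

theorem arcwalk_nodup (hac : ∀ (v : V) (p : List A), p ≠ [] → ¬ ArcWalk s t v p v)
    {u p v} (h : ArcWalk s t u p v) : (u :: p.map t).Nodup := by
  induction h with
  | nil => simp
  | @cons u' w' a p' hs h ih =>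
    rw [List.map_cons]
    refine List.nodup_cons.mpr ⟨?_, ih⟩
    intro hmem
    have hmem' : u' ∈ (a :: p').map t := by simpa using hmem
    obtain ⟨q, r, _, hq, hw⟩ := arcwalk_mem_tgt (ArcWalk.cons hs h) hmem'
    exact hac u' q hq hw

theorem arcwalk_exists_from_root [Finite V] (S : Set A) (r : V)
    (hac : ∀ (v : V) (p : List A), p ≠ [] → ¬ ArcWalk s t v p v)
    (hin : ∀ v, v ≠ r → ∃ a ∈ S, t a = v) (v : V) :
    ∃ p, (∀ a ∈ p, a ∈ S) ∧ ArcWalk s t r p v := by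
  have key : ∀ k : ℕ, (∃ p, (∀ a ∈ p, a ∈ S) ∧ ArcWalk s t r p v) ∨
      ∃ u p, (∀ a ∈ p, a ∈ S) ∧ ArcWalk s t u p v ∧ p.length = k := by
    intro k
    induction k with
    | zero => exact Or.inr ⟨v, [], by simp, ArcWalk.nil v, rfl⟩
    | succ k ih =>
      rcases ih with done | ⟨u, p, hS, hw, hl⟩
      · exact Or.inl done
      · rcases eq_or_ne u r with rfl | hu
        · exact Or.inl ⟨p, hS, hw⟩
        · obtain ⟨a, haS, hat⟩ := hin u hu
          refine Or.inr ⟨s a, a :: p, ?_, ArcWalk.cons rfl (hat ▸ hw), by simp [hl]⟩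
          intro b hb
          rcases List.mem_cons.mp hb with rfl | hb
          · exact haS
          · exact hS b hb
  haveI := Fintype.ofFinite V
  rcases key (Fintype.card V) with done | ⟨u, p, _, hw, hl⟩
  · exact done
  · exfalso
    have hnd := arcwalk_nodup hac hw
    have := hnd.length_le_card
    simp [hl] at this

theorem arcwalk_unique (S : Set A) (r : V)
    (hroot : ∀ a : A, t a ≠ r)
    (huniq : ∀ a ∈ S, ∀ b ∈ S, t a = t b → a = b) :
    ∀ (n : ℕ) (p : List A), p.length ≤ n → ∀ (v : V) (q : List A),
      (∀ a ∈ p, a ∈ S) → ArcWalk s t r p v →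
      (∀ a ∈ q, a ∈ S) → ArcWalk s t r q v → p = q := by
  intro n
  induction n with
  | zero =>
    intro p hp v q hpS hpw hqS hqw
    have hp0 : p = [] := List.length_eq_zero_iff.mp (Nat.le_zero.mp hp)
    subst hp0
    have hv : r = v := arcwalk_nil_eq hpw
    subst hv
    rcases eq_or_ne q [] with rfl | hq
    · rfl
    · obtain ⟨q', b, rfl, _, hb⟩ := arcwalk_last hqw hq
      exact absurd hb (hroot b)
  | succ n ih =>
    intro p hp v q hpS hpw hqS hqw
    rcases eq_or_ne p [] with rfl | hpne
    · have hv : r = v := arcwalk_nil_eq hpw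
      subst hv
      rcases eq_or_ne q [] with rfl | hq
      · rfl
      · obtain ⟨q', b, rfl, _, hb⟩ := arcwalk_last hqw hq
        exact absurd hb (hroot b)
    · obtain ⟨p', a, rfl, hpw', ha⟩ := arcwalk_last hpw hpne
      rcases eq_or_ne q [] with rfl | hqne
      · have hv : r = v := arcwalk_nil_eq hqw
        exact absurd (hv ▸ ha) (hroot a)
      · obtain ⟨q', b, rfl, hqw', hb⟩ := arcwalk_last hqw hqne
        have haS : a ∈ S := hpS a (by simp)
        have hbS : b ∈ S := hqS b (by simp)
        have hab : a = b := huniq a haS b hbS (ha.trans hb.symm)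
        subst hab
        have hlen : p'.length ≤ n := by
          have := hp; simp at this; omega
        have : p' = q' := by
          refine ih p' hlen (s a) q' ?_ hpw' ?_ hqw'
          · intro c hc; exact hpS c (by simp [hc])
          · intro c hc; exact hqS c (by simp [hc])
        rw [this]

end AuxWalk

section AuxNcard

variable {α : Type*}

theorem ncard_one_eq {S : Set α} (h : S.ncard = 1) {a b : α}
    (ha : a ∈ S) (hb : b ∈ S) : a = b := by
  obtain ⟨x, rfl⟩ := Set.ncard_eq_one.mp h
  simp only [Set.mem_singleton_iff] at ha hb
  rw [ha, hb]

theorem ncard_two_mem {S : Set α} (h : S.ncard = 2) {a b : α} (ha : a ∈ S) (hb : b ∈ S)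
    (hab : a ≠ b) {c : α} (hc : c ∈ S) : c = a ∨ c = b := by
  obtain ⟨x, y, hxy, rfl⟩ := Set.ncard_eq_two.mp h
  simp only [Set.mem_insert_iff, Set.mem_singleton_iff] at ha hb hc
  rcases ha with rfl | rfl <;> rcases hb with rfl | rfl <;> tauto

end AuxNcard

/-- `N` is tree-based iff the 2-SAT instance `C_N` is satisfiable:
there is a truth assignment `f : A → Bool` which is true on `S₁`, and for every
in-degree-2 vertex with incoming arcs `a, b` satisfies `(f a ∨ f b) ∧ (¬f a ∨ ¬f b)`,
and for every out-degree-2 vertex with outgoing arcs `a', b'` satisfies `f a' ∨ f b'`. -/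
theorem statement_1 {X : Type u1} {V : Type u2} {A : Type u3} (N : PhyloNetwork X V A) :
    N.TreeBased ↔
      ∃ f : A → Bool,
        (∀ a ∈ N.S1, f a = true) ∧
        (∀ v : V, InDeg N.tgt v = 2 → ∀ a b : A, N.tgt a = v → N.tgt b = v → a ≠ b →
          (f a = true ∨ f b = true) ∧ (f a = false ∨ f b = false)) ∧
        (∀ w : V, OutDeg N.src w = 2 → ∀ a b : A, N.src a = w → N.src b = w → a ≠ b →
          (f a = true ∨ f b = true)) := by
  classical
  haveI := N.finV
  haveI := N.finA
  have hroot_no : ∀ a : A, N.tgt a ≠ N.root := by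
    intro a ha
    have h0 : ({b : A | N.tgt b = N.root}).ncard = 0 := N.root_indeg
    have hemp : ({b : A | N.tgt b = N.root}) = ∅ :=
      (Set.ncard_eq_zero (Set.toFinite _)).mp h0
    exact Set.eq_empty_iff_forall_notMem.mp hemp a ha
  have factA : ∀ v : V, v ≠ N.root → InDeg N.tgt v = 1 ∨ InDeg N.tgt v = 2 := by
    intro v hv
    by_cases hl : ∃ x : X, N.leafEmb x = v
    · obtain ⟨x, rfl⟩ := hl
      exact Or.inl (N.leaf_indeg x)
    · rcases N.deg_other v hv hl with ⟨h, _⟩ | ⟨h, _⟩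
      · exact Or.inr h
      · exact Or.inl h
  have factB : ∀ v : V, (¬ ∃ x : X, N.leafEmb x = v) →
      OutDeg N.src v = 1 ∨ OutDeg N.src v = 2 := by
    intro v hl
    by_cases hv : v = N.root
    · exact hv ▸ N.root_outdeg
    · rcases N.deg_other v hv hl with ⟨_, h⟩ | ⟨_, h⟩
      · exact Or.inl h
      · exact Or.inr h
  constructor
  · rintro ⟨S, hTree, hLeafIff⟩
    have hEx : ∀ v : V, ∃ p, (∀ a ∈ p, a ∈ S) ∧ ArcWalk N.src N.tgt N.root p v :=
      fun v => (hTree v).exists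
    have hInArc : ∀ v : V, v ≠ N.root → ∃ a ∈ S, N.tgt a = v := by
      intro v hv
      obtain ⟨p, hpS, hpw⟩ := hEx v
      have hpne : p ≠ [] := by
        rintro rfl
        exact hv (arcwalk_nil_eq hpw).symm
      obtain ⟨q, a, rfl, _, ha⟩ := arcwalk_last hpw hpne
      exact ⟨a, hpS a (by simp), ha⟩
    have hAtMost : ∀ a ∈ S, ∀ b ∈ S, N.tgt a = N.tgt b → a = b := by
      intro a haS b hbS hab
      by_contra hne
      obtain ⟨p, hpS, hpw⟩ := hEx (N.src a)
      obtain ⟨q, hqS, hqw⟩ := hEx (N.src b)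
      have hw1 : ArcWalk N.src N.tgt N.root (p ++ [a]) (N.tgt a) :=
        arcwalk_append hpw (ArcWalk.cons rfl (ArcWalk.nil _))
      have hw2 : ArcWalk N.src N.tgt N.root (q ++ [b]) (N.tgt a) := by
        rw [hab]
        exact arcwalk_append hqw (ArcWalk.cons rfl (ArcWalk.nil _))
      have h1 : ∀ c ∈ p ++ [a], c ∈ S := by
        intro c hc
        rcases List.mem_append.mp hc with h | h
        · exact hpS c h
        · simp at h; subst h; exact haS
      have h2 : ∀ c ∈ q ++ [b], c ∈ S := by
        intro c hc
        rcases List.mem_append.mp hc with h | h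
        · exact hqS c h
        · simp at h; subst h; exact hbS
      have heq := (hTree (N.tgt a)).unique ⟨h1, hw1⟩ ⟨h2, hw2⟩
      have := congrArg List.reverse heq
      simp at this
      exact hne this.1
    have hGetOut : ∀ v : V, v ∉ N.leaves → ∃ c ∈ S, N.src c = v := by
      intro v hnl
      have hne0 : OutDegIn N.src S v ≠ 0 := fun h0 => hnl ((hLeafIff v).mp h0)
      have hne0' : ({a : A | a ∈ S ∧ N.src a = v}).ncard ≠ 0 := hne0
      have hnonempty : ({a : A | a ∈ S ∧ N.src a = v}).Nonempty := by
        by_contra h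
        rw [Set.not_nonempty_iff_eq_empty] at h
        exact hne0' (by rw [h]; simp)
      obtain ⟨c, hcS, hcv⟩ := hnonempty
      exact ⟨c, hcS, hcv⟩
    refine ⟨fun a => decide (a ∈ S), ?_, ?_, ?_⟩
    · intro a haS1
      simp only [decide_eq_true_eq]
      rcases haS1 with hout | hin
      · have hnl : N.src a ∉ N.leaves := by
          intro hl
          obtain ⟨x, hx⟩ := hl
          have h0 := (N.leaf_iff (N.src a)).mp ⟨x, hx⟩
          rw [h0] at hout
          exact absurd hout (by norm_num)
        obtain ⟨b, hbS, hb⟩ := hGetOut (N.src a) hnl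
        have heq : b = a := ncard_one_eq hout
          (show b ∈ {c : A | N.src c = N.src a} from hb)
          (show a ∈ {c : A | N.src c = N.src a} from rfl)
        exact heq ▸ hbS
      · obtain ⟨b, hbS, hb⟩ := hInArc (N.tgt a) (hroot_no a)
        have heq : b = a := ncard_one_eq hin
          (show b ∈ {c : A | N.tgt c = N.tgt a} from hb)
          (show a ∈ {c : A | N.tgt c = N.tgt a} from rfl)
        exact heq ▸ hbS
    · intro v hv a b ha hb hab
      simp only [decide_eq_true_eq, decide_eq_false_iff_not]
      constructor
      · obtain ⟨c, hcS, hc⟩ := hInArc v (fun h => hroot_no a (h ▸ ha))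
        rcases ncard_two_mem hv (show a ∈ {d : A | N.tgt d = v} from ha)
          (show b ∈ {d : A | N.tgt d = v} from hb) hab
          (show c ∈ {d : A | N.tgt d = v} from hc) with rfl | rfl
        · exact Or.inl hcS
        · exact Or.inr hcS
      · by_cases h1 : a ∈ S
        · by_cases h2 : b ∈ S
          · exact absurd (hAtMost a h1 b h2 (ha.trans hb.symm)) hab
          · exact Or.inr h2
        · exact Or.inl h1
    · intro w hw a b ha hb hab
      simp only [decide_eq_true_eq]
      have hnl : w ∉ N.leaves := by
        intro hl
        obtain ⟨x, hx⟩ := hl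
        have h0 := (N.leaf_iff w).mp ⟨x, hx⟩
        rw [h0] at hw
        exact absurd hw (by norm_num)
      obtain ⟨c, hcS, hc⟩ := hGetOut w hnl
      rcases ncard_two_mem hw (show a ∈ {d : A | N.src d = w} from ha)
        (show b ∈ {d : A | N.src d = w} from hb) hab
        (show c ∈ {d : A | N.src d = w} from hc) with rfl | rfl
      · exact Or.inl hcS
      · exact Or.inr hcS
  · rintro ⟨f, h1, h2, h3⟩
    set S : Set A := {a | f a = true} with hSdef
    have hmem : ∀ a : A, a ∈ S ↔ f a = true := fun a => Iff.rfl
    have hS1 : ∀ a ∈ N.S1, a ∈ S := fun a ha => (hmem a).mpr (h1 a ha)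
    have B1 : ∀ v : V, v ≠ N.root → ∃! a : A, a ∈ S ∧ N.tgt a = v := by
      intro v hv
      rcases factA v hv with hin1 | hin2
      · obtain ⟨x, hx⟩ := Set.ncard_eq_one.mp (show ({a : A | N.tgt a = v}).ncard = 1 from hin1)
        have hxv : N.tgt x = v := by
          have : x ∈ {a : A | N.tgt a = v} := by rw [hx]; rfl
          exact this
        have hxS : x ∈ S := hS1 x (Or.inr (by rw [hxv]; exact hin1))
        refine ⟨x, ⟨hxS, hxv⟩, ?_⟩
        rintro b ⟨hbS, hbv⟩
        have : b ∈ ({x} : Set A) := hx ▸ (show b ∈ {a : A | N.tgt a = v} from hbv)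
        simpa using this
      · obtain ⟨a, b, hab, hset⟩ :=
          Set.ncard_eq_two.mp (show ({c : A | N.tgt c = v}).ncard = 2 from hin2)
        have haT : N.tgt a = v := by
          have : a ∈ {c : A | N.tgt c = v} := by rw [hset]; simp
          exact this
        have hbT : N.tgt b = v := by
          have : b ∈ {c : A | N.tgt c = v} := by rw [hset]; simp
          exact this
        have hcl := h2 v hin2 a b haT hbT hab
        have key : ∀ c : A, c ∈ S → N.tgt c = v → c = a ∨ c = b := fun c hcS hcv =>
          ncard_two_mem hin2 (show a ∈ {d : A | N.tgt d = v} from haT)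
            (show b ∈ {d : A | N.tgt d = v} from hbT) hab
            (show c ∈ {d : A | N.tgt d = v} from hcv)
        rcases hcl.1 with hfa | hfb
        · refine ⟨a, ⟨(hmem a).mpr hfa, haT⟩, ?_⟩
          rintro c ⟨hcS, hcv⟩
          rcases key c hcS hcv with rfl | rfl
          · rfl
          · rcases hcl.2 with h | h
            · rw [hfa] at h; exact absurd h (by simp)
            · rw [(hmem c).mp hcS] at h; exact absurd h (by simp)
        · refine ⟨b, ⟨(hmem b).mpr hfb, hbT⟩, ?_⟩
          rintro c ⟨hcS, hcv⟩
          rcases key c hcS hcv with rfl | rfl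
          · rcases hcl.2 with h | h
            · rw [(hmem c).mp hcS] at h; exact absurd h (by simp)
            · rw [hfb] at h; exact absurd h (by simp)
          · rfl
    have huniq : ∀ a ∈ S, ∀ b ∈ S, N.tgt a = N.tgt b → a = b := by
      intro a haS b hbS hab
      exact (B1 (N.tgt a) (hroot_no a)).unique ⟨haS, rfl⟩ ⟨hbS, hab.symm⟩
    have hin : ∀ v : V, v ≠ N.root → ∃ a ∈ S, N.tgt a = v := by
      intro v hv
      obtain ⟨a, ⟨haS, hav⟩, _⟩ := B1 v hv
      exact ⟨a, haS, hav⟩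
    refine ⟨S, ?_, ?_⟩
    · intro v
      obtain ⟨p, hpS, hpw⟩ := arcwalk_exists_from_root S N.root N.acyclic hin v
      refine ⟨p, ⟨hpS, hpw⟩, ?_⟩
      rintro q ⟨hqS, hqw⟩
      exact arcwalk_unique S N.root hroot_no huniq q.length q le_rfl v p hqS hqw hpS hpw
    · intro v
      constructor
      · intro h0
        by_contra hnl
        have hnlx : ¬ ∃ x : X, N.leafEmb x = v := fun ⟨x, hx⟩ => hnl ⟨x, hx⟩
        have hc : ∃ c ∈ S, N.src c = v := by
          rcases factB v hnlx with hout1 | hout2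
          · obtain ⟨x, hx⟩ :=
              Set.ncard_eq_one.mp (show ({a : A | N.src a = v}).ncard = 1 from hout1)
            have hxv : N.src x = v := by
              have : x ∈ {a : A | N.src a = v} := by rw [hx]; rfl
              exact this
            exact ⟨x, hS1 x (Or.inl (by rw [hxv]; exact hout1)), hxv⟩
          · obtain ⟨a, b, hab, hset⟩ :=
              Set.ncard_eq_two.mp (show ({c : A | N.src c = v}).ncard = 2 from hout2)
            have haV : N.src a = v := by
              have : a ∈ {c : A | N.src c = v} := by rw [hset]; simp
              exact this
            have hbV : N.src b = v := by
              have : b ∈ {c : A | N.src c = v} := by rw [hset]; simp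
              exact this
            rcases h3 v hout2 a b haV hbV hab with hfa | hfb
            · exact ⟨a, (hmem a).mpr hfa, haV⟩
            · exact ⟨b, (hmem b).mpr hfb, hbV⟩
        obtain ⟨c, hcS, hcv⟩ := hc
        have h0' : ({a : A | a ∈ S ∧ N.src a = v}).ncard = 0 := h0
        have hpos : 0 < ({a : A | a ∈ S ∧ N.src a = v}).ncard :=
          (Set.ncard_pos (Set.toFinite _)).mpr ⟨c, hcS, hcv⟩
        omega
      · intro hl
        obtain ⟨x, hx⟩ := hl
        have h0 : OutDeg N.src v = 0 := (N.leaf_iff v).mp ⟨x, hx⟩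
        have hempty : ({a : A | N.src a = v}) = ∅ :=
          (Set.ncard_eq_zero (Set.toFinite _)).mp h0
        show ({a : A | a ∈ S ∧ N.src a = v}).ncard = 0
        have h2' : ({a : A | a ∈ S ∧ N.src a = v}) = ∅ := by
          rw [Set.eq_empty_iff_forall_notMem]
          rintro a ⟨_, hav⟩
          exact Set.eq_empty_iff_forall_notMem.mp hempty a hav
        rw [h2', Set.ncard_empty]
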